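/- arXiv:2106.08374 — 2 statements merged into one kernel-verified Lean document; each statement's English description precedes it below -/
import Mathlib

section
/- Let y > 0, α ∈ (0, 1/2), and let a : [0, y] → ℝ be continuous with a(r) ≤ -δ for all r ∈ [0, y] for some δ > 0. Define γ(y, u) = ∫_u^y a(r) dr. Then lim_{ε → 0⁺} ∫₀^{y/ε} e^{γ(y, y - ε t)/ε} t^{2α - 1} dt = Γ(2α)/|a(y)|^{2α}, where Γ is the Gamma function. -/
/-!
The exponent `γ(y, y - εt)/ε` is a difference quotient of the primitive `u ↦ ∫_u^y a` at `y`, so it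
tends to `a(y) t`; since `a ≤ -δ` it is also bounded by `-δ t` uniformly in `ε`. Dominated
convergence with the majorant `t^(2α-1) e^{-δt}` therefore turns the integral over the growing
interval `[0, y/ε]` into the Gamma integral `∫₀^∞ e^{a(y) t} t^(2α-1) dt = Γ(2α)/|a(y)|^{2α}`.
The theorem only involves `a` on `[0, y]`, so one may replace it by a continuous extension to `ℝ`.
-/

open Filter Real intervalIntegral MeasureTheory Set Topology

theorem tendsto_intervalIntegral_of_dominated_of_tendsto_atTop {ι E : Type*}
    [NormedAddCommGroup E] [NormedSpace ℝ E] {l : Filter ι} [l.IsCountablyGenerated]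
    {F : ι → ℝ → E} {f : ℝ → E} {T : ι → ℝ} {g : ℝ → ℝ} {a : ℝ}
    (hT : Tendsto T l atTop)
    (hF_meas : ∀ᶠ i in l, AEStronglyMeasurable (F i) (volume.restrict (Ioc a (T i))))
    (h_bound : ∀ᶠ i in l, ∀ t ∈ Ioc a (T i), ‖F i t‖ ≤ g t)
    (hg : IntegrableOn g (Ioi a))
    (h_lim : ∀ t ∈ Ioi a, Tendsto (fun i => F i t) l (𝓝 (f t))) :
    Tendsto (fun i => ∫ t in a..T i, F i t) l (𝓝 (∫ t in Ioi a, f t)) := by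
  -- `g` is only a majorant on `Ioc a (T i)`, so the zero extension is dominated by `‖g‖`.
  have h_ind : Tendsto (fun i => ∫ t in Ioi a, (Ioc a (T i)).indicator (F i) t) l
      (𝓝 (∫ t in Ioi a, f t)) := by
    refine tendsto_integral_filter_of_dominated_convergence (fun t => ‖g t‖) ?_ ?_ hg.norm ?_
    · filter_upwards [hF_meas] with i hi
      rw [aestronglyMeasurable_indicator_iff measurableSet_Ioc,
        Measure.restrict_restrict measurableSet_Ioc, inter_eq_left.2 Ioc_subset_Ioi_self]
      exact hi
    · filter_upwards [h_bound] with i hi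
      refine Eventually.of_forall fun t => ?_
      by_cases ht : t ∈ Ioc a (T i)
      · simpa [indicator_of_mem ht] using (hi t ht).trans (le_abs_self _)
      · simp [indicator_of_notMem ht]
    · filter_upwards [ae_restrict_mem measurableSet_Ioi] with t ht
      refine (h_lim t ht).congr' ?_
      filter_upwards [hT.eventually_ge_atTop t] with i hi
      exact (indicator_of_mem (show t ∈ Ioc a (T i) from ⟨ht, hi⟩) _).symm
  refine h_ind.congr' ?_
  filter_upwards [hT.eventually_ge_atTop a] with i hi
  rw [setIntegral_indicator measurableSet_Ioc, inter_eq_right.2 Ioc_subset_Ioi_self,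
    integral_of_le hi]

theorem hasDerivAt_integral_sub_mul {b : ℝ → ℝ} (hb : Continuous b) (y t ε : ℝ) :
    HasDerivAt (fun ε => ∫ r in (y - ε * t)..y, b r) (b (y - ε * t) * t) ε := by
  have hprim : HasDerivAt (fun u => ∫ r in u..y, b r) (-b (y - ε * t)) (y - ε * t) :=
    integral_hasDerivAt_left (hb.intervalIntegrable _ _) (hb.stronglyMeasurableAtFilter _ _)
      hb.continuousAt
  simpa [Function.comp_def] using hprim.comp ε ((hasDerivAt_mul_const t).const_sub y)

theorem tendsto_integral_sub_mul_div {b : ℝ → ℝ} (hb : Continuous b) (y t : ℝ) :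
    Tendsto (fun ε => (∫ r in (y - ε * t)..y, b r) / ε) (𝓝[≠] 0) (𝓝 (b y * t)) := by
  have := hasDerivAt_iff_tendsto_slope_zero.1 (hasDerivAt_integral_sub_mul hb y t 0)
  simpa [div_eq_inv_mul] using this

theorem sub_mul_mem_Icc {y ε t : ℝ} (hε : 0 < ε) (ht : t ∈ Icc 0 (y / ε)) :
    y - ε * t ∈ Icc 0 y := by
  have := (le_div_iff₀' hε).1 ht.2
  constructor <;> nlinarith [ht.1]

theorem integral_sub_mul_le {b : ℝ → ℝ} {y δ ε t : ℝ} (hb : Continuous b)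
    (hbδ : ∀ r ∈ Icc 0 y, b r ≤ -δ) (hε : 0 < ε) (ht : t ∈ Icc 0 (y / ε)) :
    ∫ r in (y - ε * t)..y, b r ≤ -δ * (ε * t) := by
  have hmem := sub_mul_mem_Icc hε ht
  calc ∫ r in (y - ε * t)..y, b r ≤ ∫ _ in (y - ε * t)..y, -δ :=
        integral_mono_on hmem.2 (hb.intervalIntegrable _ _) intervalIntegrable_const
          fun r hr => hbδ r ⟨hmem.1.trans hr.1, hr.2⟩
    _ = -δ * (ε * t) := by rw [intervalIntegral.integral_const, smul_eq_mul]; ring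

theorem norm_exp_integral_sub_mul_div_mul_rpow_le {b : ℝ → ℝ} {y δ ε s t : ℝ}
    (hb : Continuous b) (hbδ : ∀ r ∈ Icc 0 y, b r ≤ -δ) (hε : 0 < ε) (ht : t ∈ Icc 0 (y / ε)) :
    ‖exp ((∫ r in (y - ε * t)..y, b r) / ε) * t ^ s‖ ≤ t ^ s * exp (-δ * t) := by
  have hexp : (∫ r in (y - ε * t)..y, b r) / ε ≤ -δ * t := by
    rw [div_le_iff₀ hε]
    linarith [integral_sub_mul_le hb hbδ hε ht]
  have hts : 0 ≤ t ^ s := rpow_nonneg ht.1 s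
  rw [norm_of_nonneg (by positivity), mul_comm]
  gcongr

theorem integral_exp_mul_mul_rpow_sub_one_Ioi {c p : ℝ} (hc : c < 0) (hp : 0 < p) :
    ∫ t in Ioi 0, exp (c * t) * t ^ (p - 1) = Gamma p / |c| ^ p := by
  have hc' : 0 < -c := neg_pos.2 hc
  have := integral_rpow_mul_exp_neg_mul_Ioi hp hc'
  simp only [neg_mul, neg_neg] at this
  rw [one_div, inv_rpow hc'.le, inv_mul_eq_div] at this
  rw [abs_of_neg hc, ← this]
  simp_rw [mul_comm (exp _)]

theorem tendsto_intervalIntegral_exp_integral_sub_mul_div_mul_rpow {b : ℝ → ℝ} {y δ s : ℝ}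
    (hy : 0 < y) (hδ : 0 < δ) (hs : -1 < s) (hb : Continuous b)
    (hbδ : ∀ r ∈ Icc 0 y, b r ≤ -δ) :
    Tendsto (fun ε => ∫ t in 0..y / ε, exp ((∫ r in (y - ε * t)..y, b r) / ε) * t ^ s)
      (𝓝[>] 0) (𝓝 (∫ t in Ioi 0, exp (b y * t) * t ^ s)) := by
  have hprim : Continuous fun u => ∫ r in u..y, b r :=
    continuous_iff_continuousAt.2 fun u =>
      (integral_hasDerivAt_left (hb.intervalIntegrable _ _) (hb.stronglyMeasurableAtFilter _ _)
        hb.continuousAt).continuousAt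
  refine tendsto_intervalIntegral_of_dominated_of_tendsto_atTop
    (g := fun t => t ^ s * exp (-δ * t))
    ((tendsto_inv_nhdsGT_zero.const_mul_atTop hy).congr fun ε => (div_eq_mul_inv y ε).symm)
    (Eventually.of_forall fun ε => by fun_prop) ?_ ?_ fun t _ => ?_
  · filter_upwards [self_mem_nhdsWithin] with ε hε t ht
    exact norm_exp_integral_sub_mul_div_mul_rpow_le hb hbδ hε (Ioc_subset_Icc_self ht)
  · simpa using integrableOn_rpow_mul_exp_neg_mul_rpow hs one_pos hδ
  · exact (((tendsto_integral_sub_mul_div hb y t).mono_left (nhdsGT_le_nhdsNE 0)).rexp).mul_const _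

/-- Singular limit with non-autonomous linearization: for `y > 0`,
`α ∈ (0,1/2)`, a continuous coefficient `a : [0,y] → ℝ` bounded above by `-δ`
for some `δ > 0`, and `γ(y,u) = ∫_u^y a(r) dr`, one has
`∫₀^{y/ε} e^{γ(y, y-εt)/ε} t^{2α-1} dt → Γ(2α)/|a(y)|^{2α}` as `ε → 0⁺`. -/
theorem nonautonomous_memory_integral_limit (y α δ : ℝ) (a : ℝ → ℝ)
    (hy : 0 < y) (hα : α ∈ Set.Ioo 0 (1 / 2 : ℝ)) (hδ : 0 < δ)
    (ha_cont : ContinuousOn a (Set.Icc 0 y))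
    (ha_neg : ∀ r ∈ Set.Icc (0 : ℝ) y, a r ≤ -δ) :
    Tendsto
      (fun ε : ℝ =>
        ∫ t in (0 : ℝ)..(y / ε),
          Real.exp ((∫ r in (y - ε * t)..y, a r) / ε) * t ^ (2 * α - 1))
      (nhdsWithin 0 (Set.Ioi 0))
      (nhds (Real.Gamma (2 * α) / |a y| ^ (2 * α))) := by
  set b : ℝ → ℝ := fun r => a (projIcc 0 y hy.le r)
  have hb : Continuous b :=
    ha_cont.comp_continuous (continuous_subtype_val.comp continuous_projIcc) fun r => Subtype.prop _
  have hba : EqOn b a (Icc 0 y) := fun r hr => by simp [b, projIcc_of_mem _ hr]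
  have hbδ : ∀ r ∈ Icc 0 y, b r ≤ -δ := fun r hr => hba hr ▸ ha_neg r hr
  have hy_mem : y ∈ Icc 0 y := right_mem_Icc.2 hy.le
  have hlim := tendsto_intervalIntegral_exp_integral_sub_mul_div_mul_rpow hy hδ
    (by linarith [hα.1] : -1 < 2 * α - 1) hb hbδ
  rw [integral_exp_mul_mul_rpow_sub_one_Ioi ((hbδ y hy_mem).trans_lt (neg_neg_of_pos hδ))
    (by linarith [hα.1]), hba hy_mem] at hlim
  refine hlim.congr' ?_
  filter_upwards [self_mem_nhdsWithin] with ε (hε : 0 < ε)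
  refine integral_congr fun t ht => ?_
  have hmem := sub_mul_mem_Icc hε (by rwa [uIcc_of_le (by positivity)] at ht)
  have hsub : uIcc (y - ε * t) y ⊆ Icc 0 y := uIcc_of_le hmem.2 ▸ Icc_subset_Icc_left hmem.1
  rw [integral_congr (hba.mono hsub)]
end

section
/- Let T > 0, ε > 0, C > 0, α ∈ (0, 1/2), and let a : [0, T] → ℝ be continuous. Define γ(s, u) = ∫_u^s a(r) dr and V(s) = C ∫₀^s ∫₀^s e^{(γ(s,u) + γ(s,v))/ε} |u - v|^{2α - 1} du dv for s ∈ [0, T]. Then V is differentiable on (0, T) and satisfies the nonlocal Lyapunov-type equation ε V'(s) = 2 a(s) V(s) + 2 ε C ∫₀^s e^{γ(s,u)/ε} (s - u)^{2α - 1} du. -/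
/-!
With a primitive `A` of `a`, `e^{γ(s,u)/ε} = e^{A(s)/ε} e^{-A(u)/ε}`, so `V(s) = C e^{2A(s)/ε} D(s)`
where `D(s) = ∫₀^s ∫₀^s f(u) f(v) |u - v|^{2α-1} du dv` and `f = e^{-A/ε}`. The kernel is
symmetric, so `D(s) = 2 ∫₀^s f(u) ∫₀^u f(v) (u - v)^{2α-1} dv du`, and the outer integrand is
continuous; hence `D'(s) = 2 f(s) ∫₀^s f(v) (s - v)^{2α-1} dv`, and the product rule applied to
`e^{2A/ε} D` gives the equation.
-/

open MeasureTheory intervalIntegral Set Filter Function Topology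

theorem intervalIntegrable_abs_rpow {β : ℝ} (hβ : -1 < β) (a b : ℝ) :
    IntervalIntegrable (fun x => |x| ^ β) volume a b := by
  have hpos : ∀ d, 0 ≤ d → IntervalIntegrable (fun x => |x| ^ β) volume 0 d := fun d hd =>
    (intervalIntegrable_rpow' hβ).congr fun x hx => by
      rw [uIoc_of_le hd] at hx
      simp only [abs_of_pos hx.1]
  have hbase : ∀ d, IntervalIntegrable (fun x => |x| ^ β) volume 0 d := by
    intro d
    rcases le_total 0 d with hd | hd
    · exact hpos d hd
    · simpa [abs_neg] using (IntervalIntegrable.iff_comp_neg).1 (hpos (-d) (neg_nonneg.2 hd))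
  exact (hbase a).symm.trans (hbase b)

theorem ContinuousOn.exists_continuous_primitive {a : ℝ → ℝ} {p q : ℝ} (hpq : p ≤ q)
    (ha : ContinuousOn a (Icc p q)) :
    ∃ A : ℝ → ℝ, Continuous A ∧ (∀ t ∈ Ioo p q, HasDerivAt A (a t) t) ∧
      ∀ x ∈ Icc p q, ∀ y ∈ Icc p q, ∫ r in y..x, a r = A x - A y := by
  set ā : ℝ → ℝ := fun r => a (projIcc p q hpq r)
  have hā : Continuous ā :=
    ha.comp_continuous (continuous_subtype_val.comp continuous_projIcc) fun r =>
      (projIcc p q hpq r).2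
  have hāa : EqOn ā a (Icc p q) := fun r hr => by simp only [ā, projIcc_of_mem hpq hr]
  refine ⟨fun t => ∫ r in p..t, ā r, continuous_primitive hā.intervalIntegrable p,
    fun t ht => hāa (Ioo_subset_Icc_self ht) ▸ (hā.integral_hasStrictDerivAt p t).hasDerivAt,
    fun x hx y hy => ?_⟩
  rw [integral_interval_sub_left (hā.intervalIntegrable p x) (hā.intervalIntegrable p y)]
  exact integral_congr fun r hr => (hāa (uIcc_subset_Icc hy hx hr)).symm

section Symmetric

variable {E : Type*} [NormedAddCommGroup E] [NormedSpace ℝ E]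

theorem integral_integral_eq_two_smul_of_symm {μ : Measure ℝ} [SFinite μ] [NullSingletonClass μ]
    {k : ℝ → ℝ → E} (hsymm : ∀ u v, k u v = k v u) (hk : Integrable (uncurry k) (μ.prod μ)) :
    ∫ u, ∫ v, k u v ∂μ ∂μ = (2 : ℝ) • ∫ u, ∫ v in Iic u, k u v ∂μ ∂μ := by
  set L : Set (ℝ × ℝ) := {p | p.2 ≤ p.1}
  have hL : MeasurableSet L := measurableSet_le measurable_snd measurable_fst
  have hlower : ∫ p in L, uncurry k p ∂μ.prod μ = ∫ u, ∫ v in Iic u, k u v ∂μ ∂μ := by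
    rw [← MeasureTheory.integral_indicator hL, integral_prod _ (hk.indicator hL)]
    refine integral_congr_ae (Eventually.of_forall fun u => ?_)
    change ∫ v, L.indicator (uncurry k) (u, v) ∂μ = ∫ v in Iic u, k u v ∂μ
    rw [← MeasureTheory.integral_indicator measurableSet_Iic]
    rfl
  -- the diagonal is null, so the strict and the non-strict lower triangle agree a.e.
  have hdiag : Prod.swap ⁻¹' Lᶜ =ᵐ[μ.prod μ] L := by
    have hne : ∀ᵐ p ∂μ.prod μ, p ∈ {p : ℝ × ℝ | p.1 ≠ p.2} :=
      (Measure.ae_prod_mem_iff_ae_ae_mem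
        (measurableSet_eq_fun measurable_fst measurable_snd).compl).2
          (Eventually.of_forall fun u => (μ.ae_ne u).mono fun v h => h.symm)
    filter_upwards [hne] with p hp
    change (¬p.1 ≤ p.2) = (p.2 ≤ p.1)
    exact propext ⟨fun h => (not_le.1 h).le, fun h => not_le.2 (lt_of_le_of_ne h hp.symm)⟩
  have hupper : ∫ p in Lᶜ, uncurry k p ∂μ.prod μ = ∫ p in L, uncurry k p ∂μ.prod μ := by
    rw [← (Measure.measurePreserving_swap).setIntegral_preimage_emb
      MeasurableEquiv.prodComm.measurableEmbedding, ← setIntegral_congr_set hdiag]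
    exact setIntegral_congr_fun (hL.compl.preimage measurable_swap) fun p _ => hsymm p.2 p.1
  calc ∫ u, ∫ v, k u v ∂μ ∂μ
        = ∫ p in L, uncurry k p ∂μ.prod μ + ∫ p in Lᶜ, uncurry k p ∂μ.prod μ := by
          rw [integral_add_compl hL hk, integral_prod _ hk]; rfl
    _ = (2 : ℝ) • ∫ u, ∫ v in Iic u, k u v ∂μ ∂μ := by rw [hupper, hlower, two_smul]

theorem intervalIntegral_integral_eq_two_smul_of_symm {c : ℝ} (hc : 0 ≤ c)
    {k : ℝ → ℝ → E} (hsymm : ∀ u v, k u v = k v u)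
    (hk : Integrable (uncurry k) ((volume.restrict (Ioc 0 c)).prod (volume.restrict (Ioc 0 c)))) :
    ∫ u in 0..c, ∫ v in 0..c, k u v = (2 : ℝ) • ∫ u in 0..c, ∫ v in 0..u, k u v := by
  simp only [integral_of_le hc]
  rw [integral_integral_eq_two_smul_of_symm hsymm hk]
  congr 1
  refine setIntegral_congr_fun measurableSet_Ioc fun u hu => ?_
  rw [integral_of_le hu.1.le, Measure.restrict_restrict measurableSet_Iic, Iic_inter_Ioc_of_le hu.2]

end Symmetric

theorem integrable_comp_sub_prod_restrict_Ioc {φ : ℝ → ℝ} {c : ℝ}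
    (hφ : IntegrableOn φ (Ioo (-c) c)) :
    Integrable (fun p : ℝ × ℝ => φ (p.1 - p.2))
      ((volume.restrict (Ioc 0 c)).prod (volume.restrict (Ioc 0 c))) := by
  have hone : Integrable ((Ioc 0 c).indicator fun _ => (1 : ℝ)) :=
    (integrable_indicator_iff measurableSet_Ioc).2 (integrableOn_const measure_Ioc_lt_top.ne)
  have hconv := hone.convolution_integrand (ContinuousLinearMap.mul ℝ ℝ) (μ := volume)
    ((integrable_indicator_iff measurableSet_Ioo).2 hφ)
  rw [Measure.prod_restrict]
  refine (hconv.restrict (s := Ioc 0 c ×ˢ Ioc 0 c)).congr ?_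
  filter_upwards [ae_restrict_mem (measurableSet_Ioc.prod measurableSet_Ioc)] with p ⟨hp₁, hp₂⟩
  have hdiff : p.1 - p.2 ∈ Ioo (-c) c := ⟨by linarith [hp₁.1, hp₂.2], by linarith [hp₁.2, hp₂.1]⟩
  simp [indicator_of_mem hp₂, indicator_of_mem hdiff]

theorem continuousOn_integral_mul_comp_sub {f φ : ℝ → ℝ} {T : ℝ} (hf : Continuous f)
    (hφ : IntervalIntegrable φ volume 0 T) :
    ContinuousOn (fun u => ∫ v in 0..u, f v * φ (u - v)) (Icc 0 T) := by
  -- after `v ↦ u - v` the singularities of `φ` no longer move with `u`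
  set F : ℝ → ℝ → ℝ := fun u => {t | t ≤ u}.indicator fun t => f (u - t) * φ t
  have hF : ∀ u ∈ Icc 0 T, ∫ v in 0..u, f v * φ (u - v) = ∫ t in 0..T, F u t := by
    intro u hu
    rw [integral_indicator hu]
    simpa using integral_comp_sub_left (fun t => f (u - t) * φ t) u (a := 0) (b := u)
  obtain ⟨M, hM⟩ := isCompact_Icc.exists_bound_of_continuousOn (s := Icc (-T) T) hf.continuousOn
  intro u₀ hu₀
  refine ContinuousWithinAt.congr ?_ hF (hF u₀ hu₀)
  refine continuousWithinAt_of_dominated_interval (bound := fun t => M * ‖φ t‖) ?_ ?_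
    (hφ.norm.const_mul M) ?_
  · refine Eventually.of_forall fun u => ?_
    exact ((hf.comp (continuous_sub_left u)).aestronglyMeasurable.mul
      hφ.def'.aestronglyMeasurable).indicator measurableSet_Iic
  · filter_upwards [self_mem_nhdsWithin] with u hu
    refine Eventually.of_forall fun t ht => (norm_indicator_le_norm_self _ _).trans ?_
    rw [uIoc_of_le (hu.1.trans hu.2)] at ht
    rw [norm_mul]
    gcongr
    exact hM _ ⟨by linarith [hu.1, ht.2], by linarith [hu.2, ht.1]⟩
  · filter_upwards [volume.ae_ne u₀] with t ht _
    refine ContinuousAt.continuousWithinAt ?_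
    rcases ht.lt_or_gt with htu | htu
    · refine ((hf.comp (continuous_sub_right t)).mul
        (continuous_const (y := φ t))).continuousAt.congr ?_
      filter_upwards [Ioi_mem_nhds htu] with u hu
      exact (indicator_of_mem (le_of_lt hu : t ≤ u) _).symm
    · refine (continuousAt_const (y := (0 : ℝ))).congr ?_
      filter_upwards [Iio_mem_nhds htu] with u hu
      exact (indicator_of_notMem (s := {t | t ≤ u}) (fun h : t ≤ u => not_lt.2 h hu) _).symm

theorem integrable_mul_mul_abs_sub_rpow {f : ℝ → ℝ} {β c : ℝ} (hf : Continuous f) (hβ : -1 < β) :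
    Integrable (fun p : ℝ × ℝ => f p.1 * f p.2 * |p.1 - p.2| ^ β)
      ((volume.restrict (Ioc 0 c)).prod (volume.restrict (Ioc 0 c))) := by
  obtain ⟨M, hM⟩ := isCompact_Icc.exists_bound_of_continuousOn (s := Icc 0 c) hf.continuousOn
  have hφ : IntegrableOn (fun x => |x| ^ β) (Ioo (-c) c) :=
    (intervalIntegrable_abs_rpow hβ (-c) c).def'.mono_set fun x hx =>
      ⟨(min_le_left _ _).trans_lt hx.1, hx.2.le.trans (le_max_right _ _)⟩
  refine (integrable_comp_sub_prod_restrict_Ioc hφ).bdd_mul (c := M * M) (by fun_prop) ?_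
  rw [Measure.prod_restrict]
  filter_upwards [ae_restrict_mem (measurableSet_Ioc.prod measurableSet_Ioc)] with p ⟨hp₁, hp₂⟩
  rw [norm_mul]
  exact mul_le_mul (hM _ (Ioc_subset_Icc_self hp₁)) (hM _ (Ioc_subset_Icc_self hp₂))
    (norm_nonneg _) ((norm_nonneg _).trans (hM _ (Ioc_subset_Icc_self hp₁)))

theorem integral_integral_mul_mul_abs_sub_rpow {f : ℝ → ℝ} {β c : ℝ} (hf : Continuous f)
    (hβ : -1 < β) (hc : 0 ≤ c) :
    ∫ u in 0..c, ∫ v in 0..c, f u * f v * |u - v| ^ β =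
      2 * ∫ u in 0..c, f u * ∫ v in 0..u, f v * (u - v) ^ β := by
  rw [intervalIntegral_integral_eq_two_smul_of_symm (k := fun u v => f u * f v * |u - v| ^ β) hc
    (fun u v => by rw [abs_sub_comm]; ring) (integrable_mul_mul_abs_sub_rpow hf hβ), smul_eq_mul]
  congr 1
  refine integral_congr fun u hu => ?_
  rw [uIcc_of_le hc] at hu
  rw [← intervalIntegral.integral_const_mul]
  refine integral_congr fun v hv => ?_
  rw [uIcc_of_le hu.1] at hv
  simp only [abs_of_nonneg (sub_nonneg.2 hv.2)]
  ring

theorem hasDerivAt_integral_integral_mul_mul_abs_sub_rpow {f : ℝ → ℝ} {β s : ℝ}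
    (hf : Continuous f) (hβ : -1 < β) (hs : 0 < s) :
    HasDerivAt (fun c => ∫ u in 0..c, ∫ v in 0..c, f u * f v * |u - v| ^ β)
      (2 * (f s * ∫ v in 0..s, f v * (s - v) ^ β)) s := by
  have hw : ContinuousOn (fun u => f u * ∫ v in 0..u, f v * (u - v) ^ β) (Icc 0 (s + 1)) :=
    hf.continuousOn.mul (continuousOn_integral_mul_comp_sub hf (intervalIntegrable_rpow' hβ))
  have hprim := integral_hasDerivAt_right
    (hw.mono (uIcc_subset_Icc (left_mem_Icc.2 (by linarith)) ⟨hs.le, by linarith⟩)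
      |>.intervalIntegrable)
    ((hw.mono Ioo_subset_Icc_self).stronglyMeasurableAtFilter isOpen_Ioo s ⟨hs, lt_add_one s⟩)
    (hw.continuousAt (Icc_mem_nhds hs (lt_add_one s)))
  refine (hprim.const_mul 2).congr_of_eventuallyEq ?_
  filter_upwards [Ici_mem_nhds hs] with c hc
  exact integral_integral_mul_mul_abs_sub_rpow hf hβ hc

section Factorization

variable {A G : ℝ → ℝ} {c ε β : ℝ}

theorem integral_integral_exp_add_div_mul_abs_sub_rpow (hG : ∀ u ∈ uIcc 0 c, G u = A c - A u) :
    ∫ u in 0..c, ∫ v in 0..c, Real.exp ((G u + G v) / ε) * |u - v| ^ β =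
      Real.exp (A c / ε) ^ 2 *
        ∫ u in 0..c, ∫ v in 0..c, Real.exp (-(A u / ε)) * Real.exp (-(A v / ε)) * |u - v| ^ β := by
  rw [← intervalIntegral.integral_const_mul]
  refine integral_congr fun u hu => ?_
  rw [← intervalIntegral.integral_const_mul]
  refine integral_congr fun v hv => ?_
  simp only [hG u hu, hG v hv, add_div, sub_div, Real.exp_add, Real.exp_sub, Real.exp_neg]
  ring

theorem integral_exp_div_mul_rpow (hG : ∀ u ∈ uIcc 0 c, G u = A c - A u) :
    ∫ u in 0..c, Real.exp (G u / ε) * (c - u) ^ β =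
      Real.exp (A c / ε) * ∫ u in 0..c, Real.exp (-(A u / ε)) * (c - u) ^ β := by
  rw [← intervalIntegral.integral_const_mul]
  refine integral_congr fun u hu => ?_
  simp only [hG u hu, sub_div, Real.exp_sub, Real.exp_neg]
  ring

end Factorization

theorem nonlocal_lyapunov_equation_general (T ε C α : ℝ) (a : ℝ → ℝ)
    (hT : 0 < T) (hε : 0 < ε) (hα : α ∈ Set.Ioo 0 (1 / 2 : ℝ))
    (ha : ContinuousOn a (Set.Icc 0 T)) :
    let γ : ℝ → ℝ → ℝ := fun s u => ∫ r in u..s, a r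
    let V : ℝ → ℝ := fun s =>
      C * ∫ u in (0 : ℝ)..s, ∫ v in (0 : ℝ)..s,
        Real.exp ((γ s u + γ s v) / ε) * |u - v| ^ (2 * α - 1)
    ∀ s ∈ Set.Ioo (0 : ℝ) T,
      HasDerivAt V
        ((2 * a s * V s +
            2 * ε * C * ∫ u in (0 : ℝ)..s,
              Real.exp (γ s u / ε) * (s - u) ^ (2 * α - 1)) / ε) s := by
  intro γ V s hs
  obtain ⟨A, hAc, hA, hγA⟩ := ha.exists_continuous_primitive hT.le
  have hγ : ∀ c ∈ Icc 0 T, ∀ u ∈ uIcc 0 c, γ c u = A c - A u := fun c hc u hu =>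
    hγA c hc u (uIcc_subset_Icc (left_mem_Icc.2 hT.le) hc hu)
  have hV : ∀ c ∈ Icc 0 T, V c = C * Real.exp (A c / ε) ^ 2 * ∫ u in 0..c, ∫ v in 0..c,
      Real.exp (-(A u / ε)) * Real.exp (-(A v / ε)) * |u - v| ^ (2 * α - 1) := fun c hc => by
    rw [mul_assoc, ← integral_integral_exp_add_div_mul_abs_sub_rpow (hγ c hc)]
  have hs' : s ∈ Icc 0 T := Ioo_subset_Icc_self hs
  have hD := hasDerivAt_integral_integral_mul_mul_abs_sub_rpow (hAc.div_const ε).neg.rexp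
    (by linarith [hα.1] : -1 < 2 * α - 1) hs.1
  have hE := (((hA s hs).div_const ε).exp.pow 2).const_mul C
  refine ((hE.mul hD).congr_of_eventuallyEq
    (Filter.mem_of_superset (Icc_mem_nhds hs.1 hs.2) hV)).congr_deriv ?_
  rw [hV s hs', integral_exp_div_mul_rpow (hγ s hs')]
  simp only [Pi.pow_apply, Pi.neg_apply, Real.exp_neg]
  field_simp
  ring

/-- Nonlocal Lyapunov-type equation: with `γ(s,u) = ∫_u^s a(r) dr` and
`V(s) = C ∫₀^s ∫₀^s e^{(γ(s,u)+γ(s,v))/ε} |u-v|^{2α-1} du dv`, the function `V`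
is differentiable on `(0,T)` and satisfies
`ε V'(s) = 2 a(s) V(s) + 2 ε C ∫₀^s e^{γ(s,u)/ε} (s-u)^{2α-1} du`. -/
theorem nonlocal_lyapunov_equation (T ε C α : ℝ) (a : ℝ → ℝ)
    (hT : 0 < T) (hε : 0 < ε) (hC : 0 < C) (hα : α ∈ Set.Ioo 0 (1 / 2 : ℝ))
    (ha : ContinuousOn a (Set.Icc 0 T)) :
    let γ : ℝ → ℝ → ℝ := fun s u => ∫ r in u..s, a r
    let V : ℝ → ℝ := fun s =>
      C * ∫ u in (0 : ℝ)..s, ∫ v in (0 : ℝ)..s,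
        Real.exp ((γ s u + γ s v) / ε) * |u - v| ^ (2 * α - 1)
    ∀ s ∈ Set.Ioo (0 : ℝ) T,
      HasDerivAt V
        ((2 * a s * V s +
            2 * ε * C * ∫ u in (0 : ℝ)..s,
              Real.exp (γ s u / ε) * (s - u) ^ (2 * α - 1)) / ε) s :=
  nonlocal_lyapunov_equation_general T ε C α a hT hε hα ha
end
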